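/- Let n ≥ 3, m ≥ 2, N = nm−m+1 and 1 ≤ k ≤ m−1. Then X_k is closed under τ^m and τ^{−m}, and X_k is closed under restricted sectional paths of length m: if x ∈ X_k and there is a restricted sectional path of length m in Γ(D_N,1) from x to y or from y to x, then y ∈ X_k. -/
import Mathlib


/-!
Common combinatorial definitions for the translation quivers of
Baur–Marsh, "A geometric description of the m-cluster categories of type Dₙ".

* `DLab` is the type of second coordinates of vertices of a type-`D` translation
  quiver: `DLab.z false` is the label `0`, `DLab.z true` is the label `0̄`, and
  `DLab.pos j` is the (unbarred) label `j ≥ 1`.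
* `DVertex N h` is the vertex set `ℤ/N × {0, 0̄, 1, …, h−2}`.
* `DArrow N h` is the arrow relation of the translation quiver with `N` columns
  and labels `0, 0̄, 1, …, h−2`.
* `DTau N c` is the translation: `(i,j) ↦ (i−1, j̄)` when `i = 0`, `j ∈ {0,0̄}` and
  `c` is odd, and `(i,j) ↦ (i−1,j)` otherwise.

With these conventions, `Γ(D_N, 1)` is `(DVertex N N, DArrow N N, DTau N N)`
and `Γ(D_n, m)` is
`(DVertex (n*m−m+1) n, DArrow (n*m−m+1) n, DTau (n*m−m+1) (n*m))`.
-/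

/-- Labels `0` (= `z false`), `0̄` (= `z true`) and `j ≥ 1` (= `pos j`). -/
inductive DLab : Type
  | z : Bool → DLab
  | pos : ℕ → DLab
deriving DecidableEq

/-- The bar operation on labels: swaps `0` and `0̄`, fixes all other labels. -/
def DLab.bar : DLab → DLab
  | .z b => .z (!b)
  | .pos j => .pos j

/-- The vertex set `ℤ/N × {0, 0̄, 1, …, h−2}`. -/
def DVertex (N h : ℕ) : Set (ZMod N × DLab) :=
  {v | ∀ j : ℕ, v.2 = DLab.pos j → 1 ≤ j ∧ j ≤ h - 2}

/-- The arrows `(i,j) → (i,j−1)` and `(i,j−1) → (i+1,j)` for `1 ≤ j ≤ h−2`,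
together with `(i,1) → (i,0̄)` and `(i,0̄) → (i+1,1)`. -/
inductive DArrow (N h : ℕ) : ZMod N × DLab → ZMod N × DLab → Prop
  | down (i : ZMod N) (j : ℕ) (h1 : 2 ≤ j) (h2 : j ≤ h - 2) :
      DArrow N h (i, DLab.pos j) (i, DLab.pos (j - 1))
  | toZ (i : ZMod N) (b : Bool) :
      DArrow N h (i, DLab.pos 1) (i, DLab.z b)
  | fromZ (i : ZMod N) (b : Bool) :
      DArrow N h (i, DLab.z b) (i + 1, DLab.pos 1)
  | up (i : ZMod N) (j : ℕ) (h1 : 1 ≤ j) (h2 : j + 1 ≤ h - 2) :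
      DArrow N h (i, DLab.pos j) (i + 1, DLab.pos (j + 1))

/-- The translation `τ(i,j) = (i−1, j̄)` if `i = 0`, `j ∈ {0,0̄}` and `c` is odd,
and `τ(i,j) = (i−1, j)` otherwise.  For `Γ(D_N,1)` one takes `c = N`; for
`Γ(D_n,m)` one takes `c = n*m` (and `N = n*m−m+1`). -/
def DTau (N c : ℕ) : ZMod N × DLab → ZMod N × DLab := fun v =>
  match v with
  | (i, DLab.z b) =>
      if i = 0 ∧ c % 2 = 1 then (i - 1, DLab.z (!b)) else (i - 1, DLab.z b)
  | (i, DLab.pos j) => (i - 1, DLab.pos j)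

/-- `p 0 → p 1 → ⋯ → p m` is a path in `Γ(D_N,1)`. -/
def IsPath (N m : ℕ) (p : ℕ → ZMod N × DLab) : Prop :=
  ∀ k, k < m → DArrow N N (p k) (p (k + 1))

/-- `p 0 → p 1 → ⋯ → p m` is a sectional path in `Γ(D_N,1)`:
`τ (p (k+1)) ≠ p (k−1)` for `1 ≤ k ≤ m − 1`. -/
def IsSectional (N m : ℕ) (p : ℕ → ZMod N × DLab) : Prop :=
  IsPath N m p ∧ ∀ k, 1 ≤ k → k + 1 ≤ m → DTau N N (p (k + 1)) ≠ p (k - 1)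

/-- The extra condition defining restricted paths: there is no `1 ≤ k ≤ m−1`
such that for some `r`, `p (k+1) = (r, 0)` and `p (k−1) = (r−1, 0̄)`, or
`p (k+1) = (r, 0̄)` and `p (k−1) = (r−1, 0)`. -/
def NoForbidden (N m : ℕ) (p : ℕ → ZMod N × DLab) : Prop :=
  ¬ ∃ k, 1 ≤ k ∧ k + 1 ≤ m ∧ ∃ r : ZMod N,
      ((p (k + 1) = (r, DLab.z false) ∧ p (k - 1) = (r - 1, DLab.z true)) ∨
       (p (k + 1) = (r, DLab.z true) ∧ p (k - 1) = (r - 1, DLab.z false)))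

/-- `p 0 → p 1 → ⋯ → p m` is a restricted sectional path in `Γ(D_N,1)`. -/
def IsRestricted (N m : ℕ) (p : ℕ → ZMod N × DLab) : Prop :=
  IsSectional N m p ∧ NoForbidden N m p

/-- There is a restricted sectional path of length `m` from `x` to `y` in
`Γ(D_N,1)`; these are exactly the arrows `x → y` of the restricted `m`-th power
`μ_m(Γ(D_N,1))`. -/
def RSPath (N m : ℕ) (x y : ZMod N × DLab) : Prop :=
  ∃ p : ℕ → ZMod N × DLab, IsRestricted N m p ∧ p 0 = x ∧ p m = y

/-- The set `V = {(r,s) : s ∈ {0,0̄} or m ∣ s}` inside the vertex set of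
`Γ(D_N,1)`. -/
def VSet (N m : ℕ) : Set (ZMod N × DLab) :=
  {v | v ∈ DVertex N N ∧ ∀ j : ℕ, v.2 = DLab.pos j → m ∣ j}

/-- The map `σ'` from the vertex set of `Γ(D_n,m)` to the vertex set of
`Γ(D_N,1)`, where `N = n*m−m+1`:  `σ'(i,j) = (i*m, j*m)` if `j ∉ {0,0̄}`, or if
`j ∈ {0,0̄}`, `m` is odd and `n` is even; otherwise, with `i.val` the standard
representative of `i`, `σ'(i,j) = (i*m, j*m)` if `⌊i*m/N⌋` is even and
`σ'(i,j) = (i*m, (j̄)*m)` if `⌊i*m/N⌋` is odd (with the conventions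
`0*m = 0` and `0̄*m = 0̄`). -/
def DSigma (n m : ℕ) : ZMod (n * m - m + 1) × DLab → ZMod (n * m - m + 1) × DLab :=
  fun v =>
    match v with
    | (i, DLab.pos j) => (i * (m : ZMod (n * m - m + 1)), DLab.pos (j * m))
    | (i, DLab.z b) =>
        if m % 2 = 1 ∧ n % 2 = 0 then
          (i * (m : ZMod (n * m - m + 1)), DLab.z b)
        else if (i.val * m) / (n * m - m + 1) % 2 = 0 then
          (i * (m : ZMod (n * m - m + 1)), DLab.z b)
        else
          (i * (m : ZMod (n * m - m + 1)), DLab.z (!b))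

/-- `C` is a connected component of the quiver with arrow relation `A`:
it is nonempty, closed under arrows in both directions, and any two of its
vertices are connected by an unoriented path. -/
def IsConnComponent {α : Type*} (A : α → α → Prop) (C : Set α) : Prop :=
  C.Nonempty ∧ (∀ x ∈ C, ∀ y, (A x y ∨ A y x) → y ∈ C) ∧
    ∀ x ∈ C, ∀ y ∈ C, Relation.ReflTransGen (fun a b => A a b ∨ A b a) x y

/-- The set `X_k = {(i, j) : j ∈ {k, m+k, …, (n−2)m+k}}`. -/
def XSet (N n m k : ℕ) : Set (ZMod N × DLab) :=
  {v | ∃ (i : ZMod N) (l : ℕ), l ≤ n - 2 ∧ v = (i, DLab.pos (l * m + k))}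

/-- Vertex set `ℤ/N × {1, …, h}` of the translation quiver `Γ(A_h, N)`
(the Auslander–Reiten quiver of `D^b(A_h)/τ^N`). -/
def AVertex (N h : ℕ) : Set (ZMod N × ℕ) :=
  {v | 1 ≤ v.2 ∧ v.2 ≤ h}

/-- Arrows of `Γ(A_h, N)`: `(i,j) → (i,j−1)` for `2 ≤ j ≤ h` and
`(i,j) → (i+1,j+1)` for `1 ≤ j ≤ h−1`. -/
inductive AArrow (N h : ℕ) : ZMod N × ℕ → ZMod N × ℕ → Prop
  | down (i : ZMod N) (j : ℕ) (h1 : 2 ≤ j) (h2 : j ≤ h) :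
      AArrow N h (i, j) (i, j - 1)
  | up (i : ZMod N) (j : ℕ) (h1 : 1 ≤ j) (h2 : j + 1 ≤ h) :
      AArrow N h (i, j) (i + 1, j + 1)

/-- Translation of `Γ(A_h, N)`: `(i,j) ↦ (i−1, j)`. -/
def ATau (N : ℕ) (v : ZMod N × ℕ) : ZMod N × ℕ := (v.1 - 1, v.2)

/-- Tagged arcs in the punctured `N`-gon: `TArc.arc i k` is the arc
`D_{i, i+1+k*m}` (for `1 ≤ k ≤ n−2`), and `TArc.tag i b` is the tagged arc
`D_{ii}^+` (for `b = false`) or `D_{ii}^-` (for `b = true`). -/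
inductive TArc (N : ℕ) : Type
  | arc : ZMod N → ℕ → TArc N
  | tag : ZMod N → Bool → TArc N

/-- The set of tagged `m`-arcs: arcs `D_{i,i+1+k*m}` with `1 ≤ k ≤ n−2`
together with all tagged arcs `D_{ii}^±`. -/
def TArcSet (N n : ℕ) : Set (TArc N) :=
  {a | ∀ (i : ZMod N) (k : ℕ), a = TArc.arc i k → 1 ≤ k ∧ k ≤ n - 2}

/-- The `m`-moves between tagged `m`-arcs, i.e. the arrows of `Γ_⊙(n,m)`:
`D_{i,i+1+km} → D_{i,i+1+(k+1)m}` for `1 ≤ k ≤ n−3`;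
`D_{i,i+1+km} → D_{i+m,i+1+km} = D_{i+m,(i+m)+1+(k−1)m}` for `2 ≤ k ≤ n−2`;
`D_{i,i+1+(n−2)m} → D_{ii}^±`; and
`D_{ii}^± → D_{i+m,i} = D_{i+m,(i+m)+1+(n−2)m}`. -/
inductive MMove (N n m : ℕ) : TArc N → TArc N → Prop
  | extend (i : ZMod N) (k : ℕ) (h1 : 1 ≤ k) (h2 : k ≤ n - 3) :
      MMove N n m (TArc.arc i k) (TArc.arc i (k + 1))
  | rotate (i : ZMod N) (k : ℕ) (h1 : 2 ≤ k) (h2 : k ≤ n - 2) :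
      MMove N n m (TArc.arc i k) (TArc.arc (i + (m : ZMod N)) (k - 1))
  | toTag (i : ZMod N) (b : Bool) :
      MMove N n m (TArc.arc i (n - 2)) (TArc.tag i b)
  | fromTag (i : ZMod N) (b : Bool) :
      MMove N n m (TArc.tag i b) (TArc.arc (i + (m : ZMod N)) (n - 2))

/-- The map `τ_m` on tagged `m`-arcs: `D_{i,i+1+km} ↦ D_{i−m,(i−m)+1+km}` and
`D_{ii}^± ↦ D_{i−m,i−m}^±` if `m` is even, `D_{ii}^± ↦ D_{i−m,i−m}^∓` if `m`
is odd. -/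
def TauArc (N m : ℕ) : TArc N → TArc N
  | .arc i k => .arc (i - (m : ZMod N)) k
  | .tag i b => .tag (i - (m : ZMod N)) (if m % 2 = 1 then !b else b)

section XkAux

lemma dtau_pos (N c : ℕ) (i : ZMod N) (j : ℕ) :
    DTau N c (i, DLab.pos j) = (i - 1, DLab.pos j) := rfl

lemma tau_iter_pos (N c M : ℕ) (i : ZMod N) (j : ℕ) :
    (DTau N c)^[M] (i, DLab.pos j) = (i - (M : ZMod N), DLab.pos j) := by
  induction M with
  | zero => simp
  | succ M ih =>
      rw [Function.iterate_succ_apply', ih, dtau_pos]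
      congr 1
      push_cast
      ring

lemma tau_iter_z (N c M : ℕ) (i : ZMod N) (b : Bool) :
    ∃ i' b', (DTau N c)^[M] (i, DLab.z b) = (i', DLab.z b') := by
  induction M with
  | zero => exact ⟨i, b, rfl⟩
  | succ M ih =>
      obtain ⟨i', b', h⟩ := ih
      rw [Function.iterate_succ_apply', h]
      simp only [DTau]
      split
      · exact ⟨_, _, rfl⟩
      · exact ⟨_, _, rfl⟩

lemma darrow_inv {N h : ℕ} {x y : ZMod N × DLab} (ha : DArrow N h x y) :
    (∃ i j, 2 ≤ j ∧ j ≤ h - 2 ∧ x = (i, DLab.pos j) ∧ y = (i, DLab.pos (j - 1))) ∨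
    (∃ (i : ZMod N) (b : Bool), x = (i, DLab.pos 1) ∧ y = (i, DLab.z b)) ∨
    (∃ (i : ZMod N) (b : Bool), x = (i, DLab.z b) ∧ y = (i + 1, DLab.pos 1)) ∨
    (∃ i j, 1 ≤ j ∧ j + 1 ≤ h - 2 ∧ x = (i, DLab.pos j) ∧ y = (i + 1, DLab.pos (j + 1))) := by
  cases ha with
  | down i j h1 h2 => exact Or.inl ⟨i, j, h1, h2, rfl, rfl⟩
  | toZ i b => exact Or.inr (Or.inl ⟨i, b, rfl, rfl⟩)
  | fromZ i b => exact Or.inr (Or.inr (Or.inl ⟨i, b, rfl, rfl⟩))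
  | up i j h1 h2 => exact Or.inr (Or.inr (Or.inr ⟨i, j, h1, h2, rfl, rfl⟩))

lemma darrow_from_pos {N h : ℕ} {s : ZMod N} {J : ℕ} {y : ZMod N × DLab}
    (ha : DArrow N h (s, DLab.pos J) y) :
    (2 ≤ J ∧ J ≤ h - 2 ∧ y = (s, DLab.pos (J - 1))) ∨
    (J = 1 ∧ ∃ b, y = (s, DLab.z b)) ∨
    (1 ≤ J ∧ J + 1 ≤ h - 2 ∧ y = (s + 1, DLab.pos (J + 1))) := by
  rcases darrow_inv ha with ⟨i, j, h1, h2, hx, hy⟩ | ⟨i, b, hx, hy⟩ | ⟨i, b, hx, hy⟩ |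
    ⟨i, j, h1, h2, hx, hy⟩
  · simp only [Prod.mk.injEq, DLab.pos.injEq] at hx
    obtain ⟨rfl, rfl⟩ := hx
    exact Or.inl ⟨h1, h2, hy⟩
  · simp only [Prod.mk.injEq, DLab.pos.injEq] at hx
    obtain ⟨rfl, rfl⟩ := hx
    exact Or.inr (Or.inl ⟨rfl, b, hy⟩)
  · simp only [Prod.mk.injEq] at hx
    exact absurd hx.2 (by simp)
  · simp only [Prod.mk.injEq, DLab.pos.injEq] at hx
    obtain ⟨rfl, rfl⟩ := hx
    exact Or.inr (Or.inr ⟨h1, h2, hy⟩)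

lemma darrow_into_pos {N h : ℕ} {s : ZMod N} {J : ℕ} {x : ZMod N × DLab}
    (ha : DArrow N h x (s, DLab.pos J)) :
    (1 ≤ J ∧ J + 1 ≤ h - 2 ∧ x = (s, DLab.pos (J + 1))) ∨
    (J = 1 ∧ ∃ b, x = (s - 1, DLab.z b)) ∨
    (2 ≤ J ∧ J ≤ h - 2 ∧ x = (s - 1, DLab.pos (J - 1))) := by
  rcases darrow_inv ha with ⟨i, j, h1, h2, hx, hy⟩ | ⟨i, b, hx, hy⟩ | ⟨i, b, hx, hy⟩ |
    ⟨i, j, h1, h2, hx, hy⟩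
  · -- down : y = (i, pos (j-1)) = (s, pos J)
    simp only [Prod.mk.injEq, DLab.pos.injEq] at hy
    obtain ⟨rfl, hj⟩ := hy
    refine Or.inl ⟨by omega, by omega, ?_⟩
    rw [hx, show j = J + 1 by omega]
  · simp only [Prod.mk.injEq] at hy
    exact absurd hy.2 (by simp)
  · -- fromZ : y = (i+1, pos 1) = (s, pos J)
    simp only [Prod.mk.injEq, DLab.pos.injEq] at hy
    obtain ⟨hi, hJ⟩ := hy
    refine Or.inr (Or.inl ⟨hJ, b, ?_⟩)
    rw [hx, show s - 1 = i by rw [hi]; ring]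
  · -- up : y = (i+1, pos (j+1)) = (s, pos J)
    simp only [Prod.mk.injEq, DLab.pos.injEq] at hy
    obtain ⟨hi, hj⟩ := hy
    refine Or.inr (Or.inr ⟨by omega, by omega, ?_⟩)
    rw [hx, show s - 1 = i by rw [hi]; ring, show j = J - 1 by omega]

lemma interiorNoZ {N m : ℕ} {p : ℕ → ZMod N × DLab} (hm : 2 ≤ m)
    (hpath : IsPath N m p)
    (hsec : ∀ k, 1 ≤ k → k + 1 ≤ m → DTau N N (p (k + 1)) ≠ p (k - 1)) :
    ∀ t (s : ZMod N) b, 1 ≤ t → t + 1 ≤ m → p t ≠ (s, DLab.z b) := by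
  intro t s b ht1 ht2 hpt
  have a1 := hpath (t - 1) (by omega)
  rw [show t - 1 + 1 = t by omega, hpt] at a1
  have a2 := hpath t (by omega)
  rw [hpt] at a2
  -- a1 : into (s, z b) : must be toZ; a2 : out of (s, z b) : must be fromZ
  rcases darrow_inv a1 with ⟨i, j, _, _, hx, hy⟩ | ⟨i, b', hx, hy⟩ | ⟨i, b', hx, hy⟩ |
    ⟨i, j, _, _, hx, hy⟩
  · simp only [Prod.mk.injEq] at hy; exact absurd hy.2 (by simp)
  · -- hy : (i, z b') = (s, z b), hx : p (t-1) = (i, pos 1)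
    simp only [Prod.mk.injEq, DLab.z.injEq] at hy
    obtain ⟨rfl, rfl⟩ := hy
    rcases darrow_inv a2 with ⟨i2, j2, _, _, hx2, hy2⟩ | ⟨i2, b2, hx2, hy2⟩ |
      ⟨i2, b2, hx2, hy2⟩ | ⟨i2, j2, _, _, hx2, hy2⟩
    · simp only [Prod.mk.injEq] at hx2; exact absurd hx2.2 (by simp)
    · simp only [Prod.mk.injEq] at hx2; exact absurd hx2.2 (by simp)
    · -- hx2 : (i, z b) = (i2, z b2), hy2 : p (t+1) = (i2 + 1, pos 1)
      simp only [Prod.mk.injEq, DLab.z.injEq] at hx2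
      obtain ⟨rfl, rfl⟩ := hx2
      exact hsec t ht1 ht2 (by rw [hy2, hx, dtau_pos, add_sub_cancel_right])
    · simp only [Prod.mk.injEq] at hx2; exact absurd hx2.2 (by simp)
  · simp only [Prod.mk.injEq] at hy; exact absurd hy.2 (by simp)
  · simp only [Prod.mk.injEq] at hy; exact absurd hy.2 (by simp)

lemma fwd {N m : ℕ} {p : ℕ → ZMod N × DLab} (hm : 2 ≤ m)
    (hpath : IsPath N m p)
    (hsec : ∀ k, 1 ≤ k → k + 1 ≤ m → DTau N N (p (k + 1)) ≠ p (k - 1))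
    {i : ZMod N} {J : ℕ} (hJ : 1 ≤ J) (h0 : p 0 = (i, DLab.pos J)) :
    (J + m ≤ N - 2 ∧ p m = (i + (m : ZMod N), DLab.pos (J + m))) ∨
    (∃ j, 1 ≤ j ∧ j + m = J ∧ p m = (i, DLab.pos j)) ∨ J = m := by
  have a0 := hpath 0 (by omega)
  rw [h0] at a0
  rcases darrow_from_pos a0 with ⟨hJ2, hJN, h1'⟩ | ⟨hJ1, b, h1'⟩ | ⟨_, hJN, h1'⟩
  · -- first arrow goes down
    have main : ∀ t, t + 1 ≤ m →
        (∃ j, 1 ≤ j ∧ j + (t + 1) = J ∧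
          p t = (i, DLab.pos (j + 1)) ∧ p (t + 1) = (i, DLab.pos j)) ∨
        (t + 1 = m ∧ J = m) := by
      intro t
      induction t with
      | zero =>
          intro _
          refine Or.inl ⟨J - 1, by omega, by omega, ?_, ?_⟩
          · rw [show J - 1 + 1 = J by omega]; exact h0
          · exact h1'
      | succ t ih =>
          intro ht
          rcases ih (by omega) with ⟨j, hj1, hjJ, hpt, hpt1⟩ | ⟨he, _⟩
          · have at1 := hpath (t + 1) (by omega)
            rw [hpt1] at at1
            rcases darrow_from_pos at1 with ⟨hj2, hjN, h2'⟩ | ⟨hj1', b, h2'⟩ | ⟨_, hjN, h2'⟩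
            · refine Or.inl ⟨j - 1, by omega, by omega, ?_, h2'⟩
              rw [show j - 1 + 1 = j by omega]; exact hpt1
            · rcases Nat.lt_or_ge (t + 1 + 1) m with hlt | hge
              · exact absurd h2'
                  (interiorNoZ hm hpath hsec (t + 1 + 1) i b (by omega) (by omega))
              · exact Or.inr ⟨by omega, by omega⟩
            · exfalso
              apply hsec (t + 1) (by omega) (by omega)
              rw [show t + 1 + 1 = t + 2 from rfl, show t + 1 - 1 = t from rfl,
                h2', hpt, dtau_pos, add_sub_cancel_right]
          · omega
    rcases main (m - 1) (by omega) with ⟨j, hj1, hjJ, _, hpm⟩ | ⟨_, hJm⟩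
    · refine Or.inr (Or.inl ⟨j, hj1, by omega, ?_⟩)
      rw [show m - 1 + 1 = m by omega] at hpm
      exact hpm
    · exact Or.inr (Or.inr hJm)
  · -- first arrow is pos 1 → z : impossible since p 1 is interior
    exact absurd h1' (interiorNoZ hm hpath hsec 1 i b (by omega) (by omega))
  · -- first arrow goes up
    have main : ∀ t, t + 1 ≤ m →
        J + (t + 1) ≤ N - 2 ∧
        p t = (i + (t : ZMod N), DLab.pos (J + t)) ∧
        p (t + 1) = (i + ((t + 1 : ℕ) : ZMod N), DLab.pos (J + (t + 1))) := by
      intro t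
      induction t with
      | zero =>
          intro _
          refine ⟨by omega, by simpa using h0, by simpa using h1'⟩
      | succ t ih =>
          intro ht
          obtain ⟨hbd, hpt, hpt1⟩ := ih (by omega)
          have at1 := hpath (t + 1) (by omega)
          rw [hpt1] at at1
          rcases darrow_from_pos at1 with ⟨hj2, hjN, h2'⟩ | ⟨hj1', b, h2'⟩ | ⟨_, hjN, h2'⟩
          · exfalso
            apply hsec (t + 1) (by omega) (by omega)
            rw [show t + 1 + 1 = t + 2 from rfl, show t + 1 - 1 = t from rfl,
              h2', hpt, dtau_pos, Prod.mk.injEq]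
            constructor
            · push_cast; ring
            · rw [show J + (t + 1) - 1 = J + t by omega]
          · omega
          · refine ⟨by omega, hpt1, ?_⟩
            rw [h2', Prod.mk.injEq]
            constructor
            · push_cast; ring
            · rw [show J + (t + 1) + 1 = J + (t + 1 + 1) by omega]
    obtain ⟨hbd, _, hpm⟩ := main (m - 1) (by omega)
    rw [show m - 1 + 1 = m by omega] at hpm hbd
    exact Or.inl ⟨hbd, hpm⟩

lemma bwd {N m : ℕ} {p : ℕ → ZMod N × DLab} (hm : 2 ≤ m)
    (hpath : IsPath N m p)
    (hsec : ∀ k, 1 ≤ k → k + 1 ≤ m → DTau N N (p (k + 1)) ≠ p (k - 1))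
    {i : ZMod N} {J : ℕ} (hJ : 1 ≤ J) (hM : p m = (i, DLab.pos J)) :
    (J + m ≤ N - 2 ∧ p 0 = (i, DLab.pos (J + m))) ∨
    (∃ (j : ℕ) (c : ZMod N), 1 ≤ j ∧ j + m = J ∧ p 0 = (c, DLab.pos j)) ∨ J = m := by
  have am := hpath (m - 1) (by omega)
  rw [show m - 1 + 1 = m by omega, hM] at am
  rcases darrow_into_pos am with ⟨_, hbd0, hprev⟩ | ⟨hJ1, b, hprev⟩ | ⟨hJ2, _, hprev⟩
  · -- last arrow is a down arrow
    have main : ∀ s, s + 1 ≤ m →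
        J + s + 1 ≤ N - 2 ∧ p (m - (s + 1)) = (i, DLab.pos (J + s + 1)) ∧
        p (m - s) = (i, DLab.pos (J + s)) := by
      intro s
      induction s with
      | zero =>
          intro _
          exact ⟨by omega, by simpa using hprev, by simpa using hM⟩
      | succ s ih =>
          intro hs
          obtain ⟨hbd, hp1, hp2⟩ := ih (by omega)
          have at1 := hpath (m - (s + 2)) (by omega)
          rw [show m - (s + 2) + 1 = m - (s + 1) by omega, hp1] at at1
          rcases darrow_into_pos at1 with ⟨_, hbd', hx⟩ | ⟨hj1, b, hx⟩ | ⟨_, _, hx⟩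
          · exact ⟨by omega, by rw [show J + (s + 1) + 1 = J + s + 1 + 1 by omega]; exact hx,
              hp1⟩
          · omega
          · exfalso
            apply hsec (m - (s + 1)) (by omega) (by omega)
            rw [show J + s + 1 - 1 = J + s by omega] at hx
            rw [show m - (s + 1) + 1 = m - s by omega,
              show m - (s + 1) - 1 = m - (s + 2) by omega, hp2, hx, dtau_pos]
    obtain ⟨hbd, hp0, _⟩ := main (m - 1) (by omega)
    rw [show m - (m - 1 + 1) = 0 by omega] at hp0
    rw [show J + (m - 1) + 1 = J + m by omega] at hp0 hbd
    exact Or.inl ⟨hbd, hp0⟩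
  · -- last arrow comes from z : p (m-1) is an interior z vertex, impossible
    exact absurd hprev (interiorNoZ hm hpath hsec (m - 1) (i - 1) b (by omega) (by omega))
  · -- last arrow is an up arrow
    have main : ∀ s, s + 1 ≤ m →
        (∃ (j : ℕ) (c : ZMod N), 1 ≤ j ∧ j + s + 1 = J ∧
          p (m - (s + 1)) = (c, DLab.pos j) ∧ p (m - s) = (c + 1, DLab.pos (j + 1))) ∨
        (s + 1 = m ∧ J = m) := by
      intro s
      induction s with
      | zero =>
          intro _
          refine Or.inl ⟨J - 1, i - 1, by omega, by omega, ?_, ?_⟩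
          · exact hprev
          · rw [show m - 0 = m by omega, hM, sub_add_cancel, show J - 1 + 1 = J by omega]
      | succ s ih =>
          intro hs
          rcases ih (by omega) with ⟨j, c, hj1, hjJ, hp1, hp2⟩ | ⟨he, _⟩
          · have at1 := hpath (m - (s + 2)) (by omega)
            rw [show m - (s + 2) + 1 = m - (s + 1) by omega, hp1] at at1
            rcases darrow_into_pos at1 with ⟨_, _, hx⟩ | ⟨hj1', b, hx⟩ | ⟨hj2, _, hx⟩
            · exfalso
              apply hsec (m - (s + 1)) (by omega) (by omega)
              rw [show m - (s + 1) + 1 = m - s by omega,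
                show m - (s + 1) - 1 = m - (s + 2) by omega, hp2, hx, dtau_pos,
                add_sub_cancel_right]
            · rcases Nat.eq_zero_or_pos (m - (s + 2)) with hz | hpos
              · exact Or.inr ⟨by omega, by omega⟩
              · exact absurd hx (interiorNoZ hm hpath hsec (m - (s + 2)) (c - 1) b
                  (by omega) (by omega))
            · refine Or.inl ⟨j - 1, c - 1, by omega, by omega, hx, ?_⟩
              rw [hp1, sub_add_cancel, show j - 1 + 1 = j by omega]
          · omega
    rcases main (m - 1) (by omega) with ⟨j, c, hj1, hjJ, hp0, _⟩ | ⟨_, hJm⟩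
    · rw [show m - (m - 1 + 1) = 0 by omega] at hp0
      exact Or.inr (Or.inl ⟨j, c, hj1, by omega, hp0⟩)
    · exact Or.inr (Or.inr hJm)

lemma lbound_aux {n m k l : ℕ} (hn : 3 ≤ n) (hm : 2 ≤ m) (hk1 : 1 ≤ k)
    (h : l * m + k + m ≤ n * m - m + 1 - 2) : l + 1 ≤ n - 2 := by
  by_contra h'
  have h1 : (n - 2) * m ≤ l * m := Nat.mul_le_mul (by omega) (le_refl m)
  have h2 : (n - 2) * m + 2 * m = n * m := by
    rw [← Nat.add_mul, Nat.sub_add_cancel (by omega)]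
  set a := l * m
  set b := (n - 2) * m
  set c := n * m
  omega

lemma lsub_aux {m k l j : ℕ} (hm : 2 ≤ m) (hk2 : k ≤ m - 1) (hj : 1 ≤ j)
    (h : j + m = l * m + k) : 1 ≤ l ∧ j = (l - 1) * m + k := by
  cases l with
  | zero => rw [Nat.zero_mul] at h; exact absurd h (by omega)
  | succ l' =>
      rw [Nat.succ_mul] at h
      rw [Nat.succ_sub_one]
      set a := l' * m
      omega

lemma lne_aux {m k l : ℕ} (hm : 2 ≤ m) (hk1 : 1 ≤ k) (hk2 : k ≤ m - 1)
    (h : l * m + k = m) : False := by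
  cases l with
  | zero => rw [Nat.zero_mul] at h; omega
  | succ l' => rw [Nat.succ_mul] at h; set a := l' * m; omega

end XkAux

/-- For `n ≥ 3`, `m ≥ 2`, `N = n*m−m+1` and `1 ≤ k ≤ m−1`,
`X_k` is closed under `τ^m` and `τ^{−m}`, and closed under restricted
sectional paths of length `m` in both directions. -/
theorem X_k_closed (n m N k : ℕ) (hn : 3 ≤ n) (hm : 2 ≤ m)
    (hN : N = n * m - m + 1) (hk1 : 1 ≤ k) (hk2 : k ≤ m - 1) :
    (∀ x ∈ XSet N n m k, (DTau N N)^[m] x ∈ XSet N n m k) ∧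
    (∀ x, (DTau N N)^[m] x ∈ XSet N n m k → x ∈ XSet N n m k) ∧
    (∀ x ∈ XSet N n m k, ∀ y,
      (RSPath N m x y ∨ RSPath N m y x) → y ∈ XSet N n m k) := by
  refine ⟨?_, ?_, ?_⟩
  · rintro x ⟨i, l, hl, rfl⟩
    exact ⟨i - (m : ZMod N), l, hl, by rw [tau_iter_pos]⟩
  · rintro ⟨ix, labx⟩ hx
    obtain ⟨i', l, hl, hxeq⟩ := hx
    cases labx with
    | z b =>
        obtain ⟨c, b', hz⟩ := tau_iter_z N N m ix b
        rw [hz] at hxeq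
        exact absurd hxeq (by simp)
    | pos J =>
        rw [tau_iter_pos] at hxeq
        simp only [Prod.mk.injEq, DLab.pos.injEq] at hxeq
        exact ⟨ix, l, hl, by rw [hxeq.2]⟩
  · rintro x ⟨i, l, hl, rfl⟩ y hpth
    have hJ1 : 1 ≤ l * m + k := by omega
    rcases hpth with ⟨p, ⟨⟨hpath, hsec⟩, -⟩, hp0, hpm⟩ | ⟨p, ⟨⟨hpath, hsec⟩, -⟩, hp0, hpm⟩
    · -- path from x to y
      rcases fwd hm hpath hsec hJ1 hp0 with ⟨hbd, hpmv⟩ | ⟨j, hj1, hjm, hpmv⟩ | hC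
      · refine ⟨i + (m : ZMod N), l + 1, ?_, ?_⟩
        · exact lbound_aux hn hm hk1 (by rw [← hN]; exact hbd)
        · rw [← hpm, hpmv, show (l + 1) * m + k = l * m + k + m by ring]
      · obtain ⟨hl1, hje⟩ := lsub_aux hm hk2 hj1 hjm
        exact ⟨i, l - 1, by omega, by rw [← hpm, hpmv, hje]⟩
      · exact absurd hC (by intro h; exact lne_aux hm hk1 hk2 h)
    · -- path from y to x
      rcases bwd hm hpath hsec hJ1 hpm with ⟨hbd, hp0v⟩ | ⟨j, c, hj1, hjm, hp0v⟩ | hC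
      · refine ⟨i, l + 1, ?_, ?_⟩
        · exact lbound_aux hn hm hk1 (by rw [← hN]; exact hbd)
        · rw [← hp0, hp0v, show (l + 1) * m + k = l * m + k + m by ring]
      · obtain ⟨hl1, hje⟩ := lsub_aux hm hk2 hj1 hjm
        exact ⟨c, l - 1, by omega, by rw [← hp0, hp0v, hje]⟩
      · exact absurd hC (by intro h; exact lne_aux hm hk1 hk2 h)
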